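/- arXiv:1104.4771 — 3 statements merged into one kernel-verified Lean document; each statement's English description precedes it below -/
import Mathlib

section
/- Let f : ℝ → ℝ be continuous with antiderivative F (F' = f). The vector field X = F(t) ∂_x + ∂_u is a Lie point symmetry of the equation u_t + f(t)·u·u_x + g(t)·u_xxx = 0, in the sense that if uₛ(t,x) := u(t, x - s·F(t)) + s is defined from a solution u, then uₛ is again a solution for every s ∈ ℝ. -/
/-- X = F(t)∂_x + ∂_u is a Lie point symmetry of u_t + f(t)u u_x + g(t)u_xxx = 0:
the transformed family uₛ(t,x) = u(t, x - sF(t)) + s is again a solution. -/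
theorem kdv_lie_point_symmetry (f g F : ℝ → ℝ) (u : ℝ → ℝ → ℝ)
    (hf : Continuous f) (hF : ∀ t, HasDerivAt F (f t) t)
    (hu : ContDiff ℝ (⊤ : ℕ∞) (Function.uncurry u))
    (hpde : ∀ t x, deriv (fun τ => u τ x) t + f t * u t x * deriv (u t) x
      + g t * deriv^[3] (u t) x = 0) :
    ∀ s t x,
      deriv (fun τ => u τ (x - s * F τ) + s) t
      + f t * (u t (x - s * F t) + s) * deriv (fun y => u t (y - s * F t) + s) x
      + g t * deriv^[3] (fun y => u t (y - s * F t) + s) x = 0 := by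
  intro s t x
  set c := s * F t with hc
  set L : ℝ × ℝ → (ℝ × ℝ →L[ℝ] ℝ) := fun p => fderiv ℝ (Function.uncurry u) p with hL
  have hder : ∀ p : ℝ × ℝ, HasFDerivAt (Function.uncurry u) (L p) p :=
    fun p => (hu.differentiable (by simp) p).hasFDerivAt
  -- time partial derivative
  have h1 : ∀ t' x', HasDerivAt (fun τ => u τ x') ((L (t', x')) (1, 0)) t' := by
    intro t' x'
    have hγ : HasDerivAt (fun τ : ℝ => (τ, x')) ((1 : ℝ), (0 : ℝ)) t' :=
      HasDerivAt.prodMk (hasDerivAt_id t') (hasDerivAt_const t' x')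
    exact (hder (t', x')).comp_hasDerivAt t' hγ
  -- space partial derivative
  have h2 : ∀ t' x', HasDerivAt (fun y => u t' y) ((L (t', x')) (0, 1)) x' := by
    intro t' x'
    have hγ : HasDerivAt (fun y : ℝ => (t', y)) ((0 : ℝ), (1 : ℝ)) x' :=
      HasDerivAt.prodMk (hasDerivAt_const x' t') (hasDerivAt_id x')
    exact (hder (t', x')).comp_hasDerivAt x' hγ
  -- time derivative of transformed solution
  have hcurve : HasDerivAt (fun τ => x - s * F τ) (-(s * f t)) t := by
    simpa using ((hF t).const_mul s).const_sub x
  have hγ : HasDerivAt (fun τ : ℝ => (τ, x - s * F τ)) ((1 : ℝ), -(s * f t)) t :=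
    HasDerivAt.prodMk (hasDerivAt_id t) hcurve
  have htime : HasDerivAt (fun τ => u τ (x - s * F τ) + s)
      ((L (t, x - c)) (1, 0) - s * f t * (L (t, x - c)) (0, 1)) t := by
    have := ((hder (t, x - c)).comp_hasDerivAt t hγ).add_const s
    have hlin : (L (t, x - c)) (1, -(s * f t))
        = (L (t, x - c)) (1, 0) - s * f t * (L (t, x - c)) (0, 1) := by
      have : ((1 : ℝ), -(s * f t)) = ((1 : ℝ), (0 : ℝ)) + (-(s * f t)) • ((0 : ℝ), (1 : ℝ)) := by
        simp
      rw [this, map_add, map_smul]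
      simp [smul_eq_mul]; ring
    rwa [hlin] at this
  -- spatial shift lemmas
  have e1 : deriv (fun y => u t (y - c) + s) = fun y => deriv (u t) (y - c) := by
    funext y
    rw [deriv_add_const, deriv_comp_sub_const]
  have e2 : deriv (fun y => deriv (u t) (y - c)) = fun y => deriv (deriv (u t)) (y - c) := by
    funext y; rw [deriv_comp_sub_const]
  have e3 : deriv (fun y => deriv (deriv (u t)) (y - c))
      = fun y => deriv (deriv (deriv (u t))) (y - c) := by
    funext y; rw [deriv_comp_sub_const]
  have hsp1 : deriv (fun y => u t (y - c) + s) x = deriv (u t) (x - c) := by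
    rw [e1]
  have hsp3 : deriv^[3] (fun y => u t (y - c) + s) x = deriv^[3] (u t) (x - c) := by
    show deriv (deriv (deriv (fun y => u t (y - c) + s))) x
      = deriv (deriv (deriv (u t))) (x - c)
    rw [e1, e2, e3]
  have hA : deriv (fun τ => u τ (x - c)) t = (L (t, x - c)) (1, 0) := (h1 t (x - c)).deriv
  have hB : deriv (u t) (x - c) = (L (t, x - c)) (0, 1) := (h2 t (x - c)).deriv
  have hp := hpde t (x - c)
  rw [hA, hB] at hp
  rw [htime.deriv, hsp1, hsp3, hB]
  linear_combination hp
end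

section
/- Let f, g, h, d : (0,∞) → ℝ be smooth, and suppose g = h + (1/u)(u f)' (condition 1.8.1). Then the condition 3(u f)''' − 3(u g)'' + 2(u d)' + (u h)'' = 0 holds on (0,∞) if and only if there is a constant c₁ with d(u) = c₁/u + (1/u)(u h(u))' for all u > 0. -/
open Set

/-- deriv of a smooth-on-open-set function is differentiable there. -/
lemma diffAt_of_contDiffOn {p : ℝ → ℝ} (hp : ContDiffOn ℝ (⊤ : ℕ∞) p (Ioi 0))
    {u : ℝ} (hu : u ∈ Ioi (0:ℝ)) : DifferentiableAt ℝ p u :=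
  (hp.differentiableOn (by simp)).differentiableAt (isOpen_Ioi.mem_nhds hu)

lemma contDiffOn_deriv {p : ℝ → ℝ} (hp : ContDiffOn ℝ (⊤ : ℕ∞) p (Ioi 0)) :
    ContDiffOn ℝ (⊤ : ℕ∞) (deriv p) (Ioi 0) := by
  exact hp.deriv_of_isOpen (m := (⊤ : ℕ∞)) isOpen_Ioi (by simp)

lemma derivEqOnAux {p q : ℝ → ℝ} (hpq : EqOn p q (Ioi 0)) :
    EqOn (deriv p) (deriv q) (Ioi 0) := fun u hu =>
  Filter.EventuallyEq.deriv_eq (Filter.eventually_of_mem (isOpen_Ioi.mem_nhds hu) hpq)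

/-- Given (1.8.1), condition (1.8.3) holds iff d(u) = c₁/u + (1/u)(u h(u))'. -/
theorem condition_1_8_3 (f g h d : ℝ → ℝ)
    (hf : ContDiffOn ℝ (⊤ : ℕ∞) f (Set.Ioi 0)) (hg : ContDiffOn ℝ (⊤ : ℕ∞) g (Set.Ioi 0))
    (hh : ContDiffOn ℝ (⊤ : ℕ∞) h (Set.Ioi 0)) (hd : ContDiffOn ℝ (⊤ : ℕ∞) d (Set.Ioi 0))
    (h181 : ∀ u > (0 : ℝ), g u = h u + (1 / u) * deriv (fun x => x * f x) u) :
    (∀ u > (0 : ℝ),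
        3 * deriv^[3] (fun x => x * f x) u - 3 * deriv^[2] (fun x => x * g x) u
        + 2 * deriv (fun x => x * d x) u + deriv^[2] (fun x => x * h x) u = 0) ↔
    (∃ c₁ : ℝ, ∀ u > (0 : ℝ),
        d u = c₁ / u + (1 / u) * deriv (fun x => x * h x) u) := by
  set F := fun x : ℝ => x * f x with hFdef
  set G := fun x : ℝ => x * g x with hGdef
  set H := fun x : ℝ => x * h x with hHdef
  set D := fun x : ℝ => x * d x with hDdef
  have hidc : ContDiffOn ℝ (⊤ : ℕ∞) (fun x : ℝ => x) (Ioi 0) := contDiffOn_id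
  have hF : ContDiffOn ℝ (⊤ : ℕ∞) F (Ioi 0) := hidc.mul hf
  have hG : ContDiffOn ℝ (⊤ : ℕ∞) G (Ioi 0) := hidc.mul hg
  have hH : ContDiffOn ℝ (⊤ : ℕ∞) H (Ioi 0) := hidc.mul hh
  have hD : ContDiffOn ℝ (⊤ : ℕ∞) D (Ioi 0) := hidc.mul hd
  have hF1 := contDiffOn_deriv hF
  have hF2 := contDiffOn_deriv hF1
  have hH1 := contDiffOn_deriv hH
  -- G = H + deriv F on Ioi 0
  have hGHF : EqOn G (fun x => H x + deriv F x) (Ioi 0) := by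
    intro u hu
    have hu0 : (u:ℝ) ≠ 0 := ne_of_gt hu
    simp only [hGdef, hHdef, h181 u hu]
    field_simp
  -- second derivative of G
  have key : ∀ u ∈ Ioi (0:ℝ),
      deriv^[2] G u = deriv^[2] H u + deriv^[3] F u := by
    intro u hu
    have e1 : EqOn (deriv G) (deriv (fun x => H x + deriv F x)) (Ioi 0) :=
      derivEqOnAux hGHF
    have e2 : EqOn (deriv G) (fun x => deriv H x + deriv^[2] F x) (Ioi 0) := by
      intro v hv
      rw [e1 hv, deriv_fun_add (diffAt_of_contDiffOn hH hv) (diffAt_of_contDiffOn hF1 hv)]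
      simp [Function.iterate_succ_apply']
    have e3 := derivEqOnAux e2 hu
    have e4 : deriv (fun x => deriv H x + deriv^[2] F x) u
        = deriv^[2] H u + deriv^[3] F u := by
      rw [deriv_fun_add (diffAt_of_contDiffOn hH1 hu)]
      · simp [Function.iterate_succ_apply']
      · have : ContDiffOn ℝ (⊤ : ℕ∞) (deriv^[2] F) (Ioi 0) := by
          simpa [Function.iterate_succ_apply', Function.iterate_zero_apply] using hF2
        exact diffAt_of_contDiffOn this hu
    calc deriv^[2] G u = deriv (deriv G) u := by
          simp [Function.iterate_succ_apply']
      _ = deriv (fun x => deriv H x + deriv^[2] F x) u := e3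
      _ = deriv^[2] H u + deriv^[3] F u := e4
  -- the condition is equivalent to deriv D = deriv^[2] H on Ioi 0
  have equiv1 : (∀ u > (0:ℝ),
      3 * deriv^[3] F u - 3 * deriv^[2] G u + 2 * deriv D u + deriv^[2] H u = 0)
      ↔ (∀ u ∈ Ioi (0:ℝ), deriv D u = deriv^[2] H u) := by
    constructor
    · intro hc u hu
      have := hc u hu
      rw [key u hu] at this
      linarith
    · intro hc u hu
      rw [key u hu, hc u hu]
      ring
  rw [equiv1]
  constructor
  · intro hc
    -- D - deriv H has zero derivative on Ioi 0, convex, so constant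
    set K := fun x => D x - deriv H x with hKdef
    have hKdiff : DifferentiableOn ℝ K (Ioi 0) :=
      (hD.sub hH1).differentiableOn (by simp)
    have hKzero : ∀ x ∈ Ioi (0:ℝ), fderivWithin ℝ K (Ioi 0) x = 0 := by
      intro x hx
      have hdx : DifferentiableAt ℝ K x :=
        (diffAt_of_contDiffOn hD hx).sub (diffAt_of_contDiffOn hH1 hx)
      have hder : deriv K x = 0 := by
        rw [hKdef, deriv_fun_sub (diffAt_of_contDiffOn hD hx) (diffAt_of_contDiffOn hH1 hx)]
        have : deriv (deriv H) x = deriv^[2] H x := by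
          simp [Function.iterate_succ_apply']
        rw [this, hc x hx, sub_self]
      have hfd : HasFDerivAt K (ContinuousLinearMap.smulRight (1 : ℝ →L[ℝ] ℝ) 0) x := by
        have := hdx.hasDerivAt
        rw [hder] at this
        exact this.hasFDerivAt
      rw [fderivWithin_of_isOpen isOpen_Ioi hx, hfd.fderiv]
      ext; simp
    refine ⟨K 1, fun u hu => ?_⟩
    have h1 : (1:ℝ) ∈ Ioi (0:ℝ) := by norm_num
    have hKu : K u = K 1 :=
      (convex_Ioi (0:ℝ)).is_const_of_fderivWithin_eq_zero hKdiff hKzero hu h1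
    have hu0 : u ≠ 0 := ne_of_gt hu
    have : u * d u - deriv H u = K 1 := by
      simpa [hKdef, hDdef] using hKu
    field_simp
    linarith
  · rintro ⟨c₁, hc⟩ u hu
    have hDeq : EqOn D (fun x => c₁ + deriv H x) (Ioi 0) := by
      intro v hv
      have hv0 : (v:ℝ) ≠ 0 := ne_of_gt hv
      simp only [hDdef, hc v hv]
      field_simp
    have := derivEqOnAux hDeq hu
    rw [this, deriv_const_add']
    simp [Function.iterate_succ_apply']
end

section
/- Let u, v : ℝ × ℝ → ℝ be smooth with u a solution of u_t + f(t)·u·u_x + g(t)·u_xxx = 0 and v a solution of the adjoint equation v_t + f(t)·u·v_x + g(t)·v_xxx = 0. Define C⁰ = v(1 − F(t)u_x) and C¹ = F(t)·v·u_t + f(t)·v·u + g(t)·v_xx − F(t)g(t)·u_x·v_xx + F(t)g(t)·v_x·u_xx, where F' = f. Then D_t C⁰ + D_x C¹ = 0. -/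
open Function
open scoped ContDiff

private lemma infty_fact : (∞ : WithTop ℕ∞) ≠ 0 := by simp
private lemma infty_fact2 : (2 : WithTop ℕ∞) ≤ ∞ := by decide

private lemma sliceX {w : ℝ → ℝ → ℝ} (hw : ContDiff ℝ ∞ (uncurry w)) (t : ℝ) :
    ContDiff ℝ ∞ (w t) :=
  hw.comp (contDiff_const.prodMk contDiff_id)

private lemma hasDerivAt_iter {φ : ℝ → ℝ} (hφ : ContDiff ℝ ∞ φ) (n : ℕ) (y : ℝ) :
    HasDerivAt (deriv^[n] φ) (deriv^[n + 1] φ y) y := by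
  have h := ((hφ.iterate_deriv n).differentiable infty_fact y).hasDerivAt
  rwa [show deriv^[n + 1] φ = deriv (deriv^[n] φ) from Function.iterate_succ_apply' deriv n φ ▸ rfl]

private lemma hasDerivAt_uslice_t {w : ℝ → ℝ → ℝ} (hw : ContDiff ℝ ∞ (uncurry w)) (t x : ℝ) :
    HasDerivAt (fun τ => w τ x) (fderiv ℝ (uncurry w) (t, x) (1, 0)) t := by
  have hW : HasFDerivAt (uncurry w) (fderiv ℝ (uncurry w) (t, x)) (t, x) :=
    (hw.differentiable infty_fact (t, x)).hasFDerivAt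
  have hc : HasDerivAt (fun τ : ℝ => (τ, x)) ((1 : ℝ), (0 : ℝ)) t :=
    (hasDerivAt_id t).prodMk (hasDerivAt_const t x)
  exact hW.comp_hasDerivAt t hc

private lemma hasDerivAt_uslice_x {w : ℝ → ℝ → ℝ} (hw : ContDiff ℝ ∞ (uncurry w)) (t x : ℝ) :
    HasDerivAt (w t) (fderiv ℝ (uncurry w) (t, x) (0, 1)) x := by
  have hW : HasFDerivAt (uncurry w) (fderiv ℝ (uncurry w) (t, x)) (t, x) :=
    (hw.differentiable infty_fact (t, x)).hasFDerivAt
  have hc : HasDerivAt (fun y : ℝ => (t, y)) ((0 : ℝ), (1 : ℝ)) x :=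
    (hasDerivAt_const x t).prodMk (hasDerivAt_id x)
  exact hW.comp_hasDerivAt x hc

private lemma hasDerivAt_fd_t {w : ℝ → ℝ → ℝ} (hw : ContDiff ℝ ∞ (uncurry w)) (t x : ℝ)
    (e : ℝ × ℝ) :
    HasDerivAt (fun τ => fderiv ℝ (uncurry w) (τ, x) e)
      (fderiv ℝ (fderiv ℝ (uncurry w)) (t, x) (1, 0) e) t := by
  have hfd : ContDiff ℝ ∞ (fderiv ℝ (uncurry w)) := hw.fderiv_right (by exact_mod_cast le_top)
  have hW : HasFDerivAt (fderiv ℝ (uncurry w)) (fderiv ℝ (fderiv ℝ (uncurry w)) (t, x)) (t, x) :=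
    (hfd.differentiable infty_fact (t, x)).hasFDerivAt
  have hc : HasDerivAt (fun τ : ℝ => (τ, x)) ((1 : ℝ), (0 : ℝ)) t :=
    (hasDerivAt_id t).prodMk (hasDerivAt_const t x)
  have h1 : HasDerivAt (fun τ => fderiv ℝ (uncurry w) (τ, x))
      (fderiv ℝ (fderiv ℝ (uncurry w)) (t, x) (1, 0)) t := hW.comp_hasDerivAt t hc
  exact ((ContinuousLinearMap.apply ℝ ℝ e).hasFDerivAt).comp_hasDerivAt t h1

private lemma hasDerivAt_fd_x {w : ℝ → ℝ → ℝ} (hw : ContDiff ℝ ∞ (uncurry w)) (t x : ℝ)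
    (e : ℝ × ℝ) :
    HasDerivAt (fun y => fderiv ℝ (uncurry w) (t, y) e)
      (fderiv ℝ (fderiv ℝ (uncurry w)) (t, x) (0, 1) e) x := by
  have hfd : ContDiff ℝ ∞ (fderiv ℝ (uncurry w)) := hw.fderiv_right (by exact_mod_cast le_top)
  have hW : HasFDerivAt (fderiv ℝ (uncurry w)) (fderiv ℝ (fderiv ℝ (uncurry w)) (t, x)) (t, x) :=
    (hfd.differentiable infty_fact (t, x)).hasFDerivAt
  have hc : HasDerivAt (fun y : ℝ => (t, y)) ((0 : ℝ), (1 : ℝ)) x :=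
    (hasDerivAt_const x t).prodMk (hasDerivAt_id x)
  have h1 : HasDerivAt (fun y => fderiv ℝ (uncurry w) (t, y))
      (fderiv ℝ (fderiv ℝ (uncurry w)) (t, x) (0, 1)) x := hW.comp_hasDerivAt x hc
  exact ((ContinuousLinearMap.apply ℝ ℝ e).hasFDerivAt).comp_hasDerivAt x h1

private lemma hasDerivAt_mixed {w : ℝ → ℝ → ℝ} (hw : ContDiff ℝ ∞ (uncurry w)) (t x : ℝ) :
    HasDerivAt (fun τ => deriv (w τ) x)
      (deriv (fun y => deriv (fun τ => w τ y) t) x) t := by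
  have e1 : (fun τ => deriv (w τ) x) = fun τ => fderiv ℝ (uncurry w) (τ, x) (0, 1) :=
    funext fun τ => (hasDerivAt_uslice_x hw τ x).deriv
  have e2 : (fun y => deriv (fun τ => w τ y) t) = fun y => fderiv ℝ (uncurry w) (t, y) (1, 0) :=
    funext fun y => (hasDerivAt_uslice_t hw t y).deriv
  have hsym : fderiv ℝ (fderiv ℝ (uncurry w)) (t, x) (1, 0) (0, 1)
      = fderiv ℝ (fderiv ℝ (uncurry w)) (t, x) (0, 1) (1, 0) :=
    (hw.contDiffAt.isSymmSndFDerivAt (by simpa [minSmoothness_of_isRCLikeNormedField] using infty_fact2)) _ _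
  rw [e1, e2, (hasDerivAt_fd_x hw t x (1, 0)).deriv, ← hsym]
  exact hasDerivAt_fd_t hw t x (0, 1)

/-- Ibragimov's conserved vector (2.3') for u_t + f(t)u u_x + g(t)u_xxx = 0 and
its adjoint v_t + f(t)u v_x + g(t)v_xxx = 0 is divergence-free. -/
theorem ibragimov_conserved_vector (f g F : ℝ → ℝ) (u v : ℝ → ℝ → ℝ)
    (hf : Continuous f) (hg : Continuous g) (hF : ∀ t, HasDerivAt F (f t) t)
    (hu : ContDiff ℝ (⊤ : ℕ∞) (Function.uncurry u)) (hv : ContDiff ℝ (⊤ : ℕ∞) (Function.uncurry v))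
    (hpde : ∀ t x, deriv (fun τ => u τ x) t + f t * u t x * deriv (u t) x
      + g t * deriv^[3] (u t) x = 0)
    (hadj : ∀ t x, deriv (fun τ => v τ x) t + f t * u t x * deriv (v t) x
      + g t * deriv^[3] (v t) x = 0) :
    ∀ t x,
      deriv (fun τ => v τ x * (1 - F τ * deriv (u τ) x)) t
      + deriv (fun y =>
          F t * v t y * deriv (fun τ => u τ y) t
          + f t * v t y * u t y
          + g t * deriv^[2] (v t) y
          - F t * g t * deriv (u t) y * deriv^[2] (v t) y
          + F t * g t * deriv (v t) y * deriv^[2] (u t) y) x = 0 := by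
  intro t x
  have hu' : ContDiff ℝ ∞ (uncurry u) := hu.of_le (by simp)
  have hv' : ContDiff ℝ ∞ (uncurry v) := hv.of_le (by simp)
  have hut : ContDiff ℝ ∞ (u t) := sliceX hu' t
  have hvt : ContDiff ℝ ∞ (v t) := sliceX hv' t
  -- single variable derivatives
  have hu0 : HasDerivAt (u t) (deriv (u t) x) x := hasDerivAt_iter hut 0 x
  have hu1 : HasDerivAt (deriv (u t)) (deriv^[2] (u t) x) x := hasDerivAt_iter hut 1 x
  have hu2 : HasDerivAt (deriv^[2] (u t)) (deriv^[3] (u t) x) x := hasDerivAt_iter hut 2 x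
  have hu3 : HasDerivAt (deriv^[3] (u t)) (deriv^[4] (u t) x) x := hasDerivAt_iter hut 3 x
  have hw0 : HasDerivAt (v t) (deriv (v t) x) x := hasDerivAt_iter hvt 0 x
  have hw1 : HasDerivAt (deriv (v t)) (deriv^[2] (v t) x) x := hasDerivAt_iter hvt 1 x
  have hw2 : HasDerivAt (deriv^[2] (v t)) (deriv^[3] (v t) x) x := hasDerivAt_iter hvt 2 x
  -- time derivative of v slice, with adjoint PDE value
  have hA : HasDerivAt (fun τ => v τ x)
      (-(f t * u t x * deriv (v t) x + g t * deriv^[3] (v t) x)) t := by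
    have h := hasDerivAt_uslice_t hv' t x
    have e : fderiv ℝ (uncurry v) (t, x) (1, 0)
        = -(f t * u t x * deriv (v t) x + g t * deriv^[3] (v t) x) := by
      rw [← h.deriv]; linarith [hadj t x]
    exact e ▸ h
  -- the PDE rewrite for the time derivative of u
  have efun : (fun y => deriv (fun τ => u τ y) t)
      = fun y => -(f t * u t y * deriv (u t) y + g t * deriv^[3] (u t) y) :=
    funext fun y => by linarith [hpde t y]
  -- mixed partial : d/dt (u_x) with explicit value
  have hRHS : ∀ y : ℝ, HasDerivAt
      (fun y => -(f t * u t y * deriv (u t) y + g t * deriv^[3] (u t) y))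
      (-(f t * deriv (u t) x * deriv (u t) x + f t * u t x * deriv^[2] (u t) x
        + g t * deriv^[4] (u t) x)) x := by
    intro y
    have h := ((((hasDerivAt_const x (f t)).mul hu0).mul hu1).add
      ((hasDerivAt_const x (g t)).mul hu3)).neg
    refine h.congr_deriv ?_
    simp only [Pi.mul_apply, Pi.add_apply, Pi.neg_apply, Pi.sub_apply]
    ring
  have hmixval : deriv (fun y => deriv (fun τ => u τ y) t) x
      = -(f t * deriv (u t) x * deriv (u t) x + f t * u t x * deriv^[2] (u t) x
        + g t * deriv^[4] (u t) x) := by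
    rw [efun]; exact (hRHS x).deriv
  have hC : HasDerivAt (fun τ => deriv (u τ) x)
      (-(f t * deriv (u t) x * deriv (u t) x + f t * u t x * deriv^[2] (u t) x
        + g t * deriv^[4] (u t) x)) t := by
    rw [← hmixval]; exact hasDerivAt_mixed hu' t x
  -- time derivative term
  have hD : HasDerivAt (fun τ => v τ x * (1 - F τ * deriv (u τ) x))
      (-(f t * u t x * deriv (v t) x + g t * deriv^[3] (v t) x) * (1 - F t * deriv (u t) x)
       - v t x * (f t * deriv (u t) x
         + F t * (-(f t * deriv (u t) x * deriv (u t) x + f t * u t x * deriv^[2] (u t) x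
           + g t * deriv^[4] (u t) x)))) t := by
    have h := hA.mul ((hasDerivAt_const t (1 : ℝ)).sub ((hF t).mul hC))
    refine h.congr_deriv ?_
    simp only [Pi.mul_apply, Pi.add_apply, Pi.neg_apply, Pi.sub_apply]
    ring
  -- space derivative term
  have egoal : (fun y =>
          F t * v t y * deriv (fun τ => u τ y) t
          + f t * v t y * u t y
          + g t * deriv^[2] (v t) y
          - F t * g t * deriv (u t) y * deriv^[2] (v t) y
          + F t * g t * deriv (v t) y * deriv^[2] (u t) y)
      = (fun y =>
          F t * v t y * (-(f t * u t y * deriv (u t) y + g t * deriv^[3] (u t) y))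
          + f t * v t y * u t y
          + g t * deriv^[2] (v t) y
          - F t * g t * deriv (u t) y * deriv^[2] (v t) y
          + F t * g t * deriv (v t) y * deriv^[2] (u t) y) := by
    funext y
    have := hpde t y
    have e : deriv (fun τ => u τ y) t
        = -(f t * u t y * deriv (u t) y + g t * deriv^[3] (u t) y) := by linarith
    rw [e]
  have hG : HasDerivAt (fun y =>
          F t * v t y * (-(f t * u t y * deriv (u t) y + g t * deriv^[3] (u t) y))
          + f t * v t y * u t y
          + g t * deriv^[2] (v t) y
          - F t * g t * deriv (u t) y * deriv^[2] (v t) y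
          + F t * g t * deriv (v t) y * deriv^[2] (u t) y)
      (F t * deriv (v t) x * (-(f t * u t x * deriv (u t) x + g t * deriv^[3] (u t) x))
        + F t * v t x * (-(f t * deriv (u t) x * deriv (u t) x
            + f t * u t x * deriv^[2] (u t) x + g t * deriv^[4] (u t) x))
        + f t * (deriv (v t) x * u t x + v t x * deriv (u t) x)
        + g t * deriv^[3] (v t) x
        - F t * g t * (deriv^[2] (u t) x * deriv^[2] (v t) x
            + deriv (u t) x * deriv^[3] (v t) x)
        + F t * g t * (deriv^[2] (v t) x * deriv^[2] (u t) x
            + deriv (v t) x * deriv^[3] (u t) x)) x := by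
    have T1 := (((hasDerivAt_const x (F t)).mul hw0).mul
      (((((hasDerivAt_const x (f t)).mul hu0).mul hu1).add
        ((hasDerivAt_const x (g t)).mul hu3)).neg))
    have T2 := ((hasDerivAt_const x (f t)).mul hw0).mul hu0
    have T3 := (hasDerivAt_const x (g t)).mul hw2
    have T4 := ((hasDerivAt_const x (F t * g t)).mul hu1).mul hw2
    have T5 := ((hasDerivAt_const x (F t * g t)).mul hw1).mul hu2
    have h := (((T1.add T2).add T3).sub T4).add T5
    refine h.congr_deriv ?_
    simp only [Pi.mul_apply, Pi.add_apply, Pi.neg_apply, Pi.sub_apply]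
    ring
  have e2 : deriv (fun y =>
          F t * v t y * deriv (fun τ => u τ y) t
          + f t * v t y * u t y
          + g t * deriv^[2] (v t) y
          - F t * g t * deriv (u t) y * deriv^[2] (v t) y
          + F t * g t * deriv (v t) y * deriv^[2] (u t) y) x
      = (F t * deriv (v t) x * (-(f t * u t x * deriv (u t) x + g t * deriv^[3] (u t) x))
        + F t * v t x * (-(f t * deriv (u t) x * deriv (u t) x
            + f t * u t x * deriv^[2] (u t) x + g t * deriv^[4] (u t) x))
        + f t * (deriv (v t) x * u t x + v t x * deriv (u t) x)
        + g t * deriv^[3] (v t) x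
        - F t * g t * (deriv^[2] (u t) x * deriv^[2] (v t) x
            + deriv (u t) x * deriv^[3] (v t) x)
        + F t * g t * (deriv^[2] (v t) x * deriv^[2] (u t) x
            + deriv (v t) x * deriv^[3] (u t) x)) := by
    rw [egoal]; exact hG.deriv
  rw [hD.deriv, e2]
  ring
end
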